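/- Let p be a prime and α, β ∈ ℤ⁺. The nilpotency index of the augmentation ideal of the group ring (ℤ/p^βℤ)[ℤ/p^αℤ] equals (β(p−1)+1)·p^{α−1}. Equivalently, δ(ℤ/p^αℤ, ℤ/p^βℤ), the maximal functional degree of a map ℤ/p^αℤ → ℤ/p^βℤ, equals (β(p−1)+1)·p^{α−1} − 1. -/

import Mathlib

open Classical in
/-- Difference operator: `(Δ_a f)(x) = f (x + a) - f x`. -/
def fdiff {A B : Type*} [AddCommGroup A] [AddCommGroup B] (a : A) (f : A → B) : A → B :=
  fun x => f (x + a) - f x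

/-- `DegLE f n` means every `(n+1)`-fold difference of `f` vanishes, i.e. `fdeg f ≤ n`. -/
def DegLE {A B : Type*} [AddCommGroup A] [AddCommGroup B] (f : A → B) (n : ℕ) : Prop :=
  ∀ l : List A, l.length = n + 1 → l.foldr fdiff f = 0

open Classical in
/-- The functional degree of `f : A → B`, valued in `ℕ ∪ {-∞, ∞}`:
`fdeg 0 = ⊥ (= -∞)`; for nonzero `f`, it is the least `n` with all `(n+1)`-fold
differences of `f` vanishing, or `⊤ (= ∞)` if there is no such `n`. -/
noncomputable def fdeg {A B : Type*} [AddCommGroup A] [AddCommGroup B] (f : A → B) :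
    WithBot ℕ∞ :=
  if f = 0 then ⊥
  else if ∃ n : ℕ, DegLE f n then (((sInf {n : ℕ | DegLE f n} : ℕ) : ℕ∞) : WithBot ℕ∞)
  else ((⊤ : ℕ∞) : WithBot ℕ∞)

/-- The augmentation map of the group ring `R[A]`. -/
noncomputable def aug (R : Type*) [CommRing R] (A : Type*) [AddCommGroup A] :
    AddMonoidAlgebra R A →ₐ[R] R :=
  (AddMonoidAlgebra.lift R R A) 1

/-- The augmentation ideal of `R[A]`. -/
noncomputable def augIdeal (R : Type*) [CommRing R] (A : Type*) [AddCommGroup A] :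
    Ideal (AddMonoidAlgebra R A) :=
  RingHom.ker (aug R A).toRingHom

/-!
Let `g` generate `ℤ/p^α`, `q = p^(α-1)`, `Y = g - 1`, `Z = g^q - 1`, and let `p^β = 0` in the
coefficient ring. The augmentation ideal is `(Y)`, and iterated differences of `f` are the
translation action of products of elements `g^a - 1` on `f`, so both claims reduce to
`Y^N = 0` and `Y^(N-1) ≠ 0` for `N = (β(p-1)+1)q`.

Since `p` divides the inner binomial coefficients of `p`-powers, `Y^q = Z + pYh` and
`Z^p = pZw` with `w` a unit. Hence `Y^(q(p-1)) = V + pG` with `V = Z^(p-1)`, `V² = pwV` and `G`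
nilpotent, and by induction `Y^(q(p-1)β) = p^(β-1) V u` with `u` a unit. Multiplying by `Y^q`
produces a factor `p^β`, so `Y^N = 0`. Multiplying by `Y^(q-1)` gives `u` times
`p^(β-1) (g^q - 1)^(p-1) (g - 1)^(q-1)`, the image of `p^(β-1)` times a monic polynomial in `g` of
degree `p^α - 1` < `p^α`; its coefficient at `p^α - 1` is `p^(β-1) ≠ 0`.
-/

section CommRing

variable {S : Type*} [CommRing S]

theorem isNilpotent_of_pow_eq_mul {a x y : S} {n : ℕ} (hx : x ^ n = a * y)
    (ha : IsNilpotent a) : IsNilpotent x :=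
  .of_pow (hx ▸ (Commute.all _ _).isNilpotent_mul_right ha)

theorem exists_isUnit_add_mul_pow_eq {a v w g : S} (hv : v ^ 2 = a * w * v) (hw : IsUnit w)
    (hg : IsNilpotent g) (n : ℕ) :
    ∃ u, IsUnit u ∧ (v + a * g) ^ (n + 1) = a ^ n * v * u + a ^ (n + 1) * g ^ (n + 1) := by
  induction n with
  | zero => exact ⟨1, isUnit_one, by ring⟩
  | succ n ih =>
    obtain ⟨u, hu, h⟩ := ih
    have hnil : IsNilpotent (u * g + g ^ (n + 1)) :=
      (Commute.all _ _).isNilpotent_add ((Commute.all _ _).isNilpotent_mul_left hg) (hg.pow_succ n)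
    refine ⟨w * u + (u * g + g ^ (n + 1)),
      hnil.isUnit_add_left_of_commute (hw.mul hu) (Commute.all _ _), ?_⟩
    rw [pow_succ, h]
    linear_combination (a ^ n * u) * hv

variable {p : ℕ} (hp : p.Prime)
include hp

theorem exists_sub_one_pow_prime_pow_eq (x : S) (k : ℕ) :
    ∃ h, (x - 1) ^ p ^ k = x ^ p ^ k - 1 + p * (x - 1) * h := by
  obtain ⟨r, hr⟩ := exists_add_pow_prime_pow_eq hp (x - 1) 1 k
  refine ⟨-r, ?_⟩
  rw [sub_add_cancel, one_pow] at hr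
  linear_combination -hr

theorem exists_isUnit_pow_prime_eq_mul {z : S} (hz : (z + 1) ^ p = 1)
    (hpnil : IsNilpotent (p : S)) : ∃ w, IsUnit w ∧ z ^ p = p * z * w := by
  have h := add_pow_prime_eq hp z 1
  set c : ℕ → S := fun k => z ^ (k - 1) * 1 ^ (p - k - 1) * ((p.choose k / p : ℕ) : S)
  have hzp : z ^ p = p * z * -∑ k ∈ Finset.Ioo 0 p, c k := by
    rw [hz, one_pow] at h
    linear_combination -h
  have hznil : IsNilpotent z := isNilpotent_of_pow_eq_mul (by rw [hzp, mul_assoc]) hpnil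
  have h1 : 1 ∈ Finset.Ioo 0 p := Finset.mem_Ioo.2 ⟨one_pos, hp.one_lt⟩
  have hc1 : c 1 = 1 := by simp [c, Nat.div_self hp.pos]
  have hrest : IsNilpotent (∑ k ∈ (Finset.Ioo 0 p).erase 1, c k) := by
    refine isNilpotent_sum fun k hk => ?_
    obtain ⟨hk1, hk⟩ := Finset.mem_erase.1 hk
    refine (Commute.all _ _).isNilpotent_mul_right ((Commute.all _ _).isNilpotent_mul_right ?_)
    exact hznil.pow_of_pos (by have := (Finset.mem_Ioo.1 hk).1; omega)
  refine ⟨_, IsUnit.neg ?_, hzp⟩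
  rw [← Finset.add_sum_erase _ _ h1, hc1]
  exact hrest.isUnit_one_add

variable {g : S} {k β : ℕ} (hg : g ^ p ^ (k + 1) = 1) (hβ : (p : S) ^ (β + 1) = 0)
include hg hβ

theorem exists_isUnit_sub_one_pow_eq :
    ∃ u, IsUnit u ∧
      (g - 1) ^ ((β + 1) * (p - 1) * p ^ k) = p ^ β * (g ^ p ^ k - 1) ^ (p - 1) * u := by
  have hpnil : IsNilpotent (p : S) := ⟨β + 1, hβ⟩
  set z := g ^ p ^ k - 1
  obtain ⟨w, hw, hzp⟩ := exists_isUnit_pow_prime_eq_mul hp (z := z)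
    (by rw [sub_add_cancel, ← pow_mul, ← pow_succ, hg]) hpnil
  obtain ⟨h, hh⟩ := exists_sub_one_pow_prime_pow_eq hp g k
  have hgnil : IsNilpotent (g - 1) := by
    obtain ⟨h', hh'⟩ := exists_sub_one_pow_prime_pow_eq hp g (k + 1)
    exact isNilpotent_of_pow_eq_mul (by rw [hh', hg, sub_self, zero_add, mul_assoc]) hpnil
  obtain ⟨F, hF⟩ := sub_dvd_pow_sub_pow ((g - 1) ^ p ^ k) z (p - 1)
  have hsplit : ((g - 1) ^ p ^ k) ^ (p - 1) = z ^ (p - 1) + p * ((g - 1) * h * F) := by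
    linear_combination hF + F * hh
  have hv : (z ^ (p - 1)) ^ 2 = p * w * z ^ (p - 1) := by
    have h2 : (z ^ (p - 1)) ^ 2 = z ^ (p - 2) * z ^ p := by
      rw [← pow_mul, ← pow_add]; congr 1; have := hp.two_le; omega
    have h3 : z ^ (p - 2) * z = z ^ (p - 1) := by
      rw [← pow_succ]; congr 1; have := hp.two_le; omega
    rw [h2, hzp, ← h3]; ring
  obtain ⟨u, hu, hpow⟩ := exists_isUnit_add_mul_pow_eq hv hw
    ((Commute.all _ _).isNilpotent_mul_right ((Commute.all _ _).isNilpotent_mul_right hgnil)) β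
  refine ⟨u, hu, ?_⟩
  rw [show (β + 1) * (p - 1) * p ^ k = p ^ k * (p - 1) * (β + 1) by ring, pow_mul, pow_mul,
    hsplit, hpow, hβ, zero_mul, add_zero]

theorem sub_one_pow_eq_zero : (g - 1) ^ (((β + 1) * (p - 1) + 1) * p ^ k) = 0 := by
  obtain ⟨u, -, hu⟩ := exists_isUnit_sub_one_pow_eq hp hg hβ
  obtain ⟨w, -, hzp⟩ := exists_isUnit_pow_prime_eq_mul hp (z := g ^ p ^ k - 1)
    (by rw [sub_add_cancel, ← pow_mul, ← pow_succ, hg]) ⟨β + 1, hβ⟩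
  obtain ⟨h, hh⟩ := exists_sub_one_pow_prime_pow_eq hp g k
  have hz : (g ^ p ^ k - 1) ^ (p - 1) * (g ^ p ^ k - 1) = (g ^ p ^ k - 1) ^ p := by
    rw [← pow_succ, Nat.sub_add_cancel hp.one_le]
  rw [add_mul, one_mul, pow_add, hu, hh]
  linear_combination (p ^ β * u) * hz + (p ^ β * u) * hzp +
    (u * (g ^ p ^ k - 1) * w + u * (g ^ p ^ k - 1) ^ (p - 1) * (g - 1) * h) * hβ

end CommRing

open AddMonoidAlgebra Polynomial

section GroupAlgebra

variable {R : Type*} [CommRing R]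

theorem single_one_pow {n : ℕ} (m : ℕ) :
    (single (1 : ZMod n) (1 : R)) ^ m = single (m : ZMod n) 1 := by
  simp [single_pow]

theorem single_one_pow_card {n : ℕ} : (single (1 : ZMod n) (1 : R)) ^ n = 1 := by
  rw [single_one_pow, ZMod.natCast_self, one_def]

theorem natCast_pow_eq_zero {A : Type*} [AddCommGroup A] {p β : ℕ} (h : (p : R) ^ β = 0) :
    (p : AddMonoidAlgebra R A) ^ β = 0 := by
  rw [← map_natCast (algebraMap R _), ← map_pow, h, map_zero]

theorem coeff_aeval_single_one {n : ℕ} {P : R[X]} (hP : P.natDegree < n) {m : ℕ} (hm : m < n) :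
    (aeval (single (1 : ZMod n) (1 : R)) P).coeff m = P.coeff m := by
  rw [aeval_eq_sum_range' hP, AddMonoidAlgebra.coeff_sum, Finset.sum_apply',
    Finset.sum_eq_single m]
  · simp
  · intro i hi him
    rw [single_one_pow, smul_single', coeff_single, Finsupp.single_apply, if_neg]
    rwa [ZMod.natCast_eq_natCast_iff', Nat.mod_eq_of_lt hm,
      Nat.mod_eq_of_lt (Finset.mem_range.1 hi)]
  · simp [hm]

theorem natCast_pow_mul_sub_one_pow_ne_zero {p k β : ℕ} (hp : p ≠ 0)
    (hβ : (p : R) ^ β ≠ 0) :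
    (p : AddMonoidAlgebra R (ZMod (p ^ (k + 1)))) ^ β
      * (single (1 : ZMod (p ^ (k + 1))) (1 : R) ^ p ^ k - 1) ^ (p - 1)
      * (single (1 : ZMod (p ^ (k + 1))) (1 : R) - 1) ^ (p ^ k - 1) ≠ 0 := by
  have := nontrivial_of_ne _ _ hβ
  have hp₀ := Nat.pos_of_ne_zero hp
  set Q : R[X] := (X ^ p ^ k - C 1) ^ (p - 1) * (X - C 1) ^ (p ^ k - 1) with hQ_def
  have hZ : (X ^ p ^ k - C (1 : R)).Monic := monic_X_pow_sub_C 1 (pow_ne_zero _ hp)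
  have hQ : Q.Monic := (hZ.pow _).mul ((monic_X_sub_C 1).pow _)
  have hdeg : Q.natDegree = p ^ (k + 1) - 1 := by
    rw [hQ_def, (hZ.pow _).natDegree_mul ((monic_X_sub_C 1).pow _), hZ.natDegree_pow,
      (monic_X_sub_C 1).natDegree_pow, natDegree_X_pow_sub_C, natDegree_X_sub_C, pow_succ,
      mul_comm (p - 1)]
    have := Nat.one_le_pow k p hp₀
    have := Nat.le_mul_of_pos_right (p ^ k) hp₀
    have := Nat.mul_sub_one (p ^ k) p
    omega
  have hlt : p ^ (k + 1) - 1 < p ^ (k + 1) := Nat.sub_lt (pow_pos hp₀ _) one_pos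
  have hcoeff := coeff_aeval_single_one (R := R) (P := C ((p : R) ^ β) * Q)
    ((natDegree_C_mul_le _ _).trans_lt (hdeg ▸ hlt)) hlt
  rw [coeff_C_mul, ← hdeg, hQ.coeff_natDegree, hdeg, mul_one] at hcoeff
  intro h0
  apply hβ
  rw [← hcoeff]
  simpa [Q, mul_assoc] using congrArg (·.coeff ((p ^ (k + 1) - 1 : ℕ) : ZMod (p ^ (k + 1)))) h0

theorem sub_one_pow_ne_zero {p k β : ℕ} (hp : p.Prime) (hβ₀ : (p : R) ^ β ≠ 0)
    (hβ : (p : R) ^ (β + 1) = 0) :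
    (single (1 : ZMod (p ^ (k + 1))) (1 : R) - 1) ^ (((β + 1) * (p - 1) + 1) * p ^ k - 1)
      ≠ 0 := by
  obtain ⟨u, hu, hfac⟩ :=
    exists_isUnit_sub_one_pow_eq (k := k) hp single_one_pow_card (natCast_pow_eq_zero hβ)
  have hexp : ((β + 1) * (p - 1) + 1) * p ^ k - 1 = (β + 1) * (p - 1) * p ^ k + (p ^ k - 1) := by
    have := Nat.one_le_pow k p hp.pos
    rw [add_mul, one_mul]; omega
  rw [hexp, pow_add _ ((β + 1) * (p - 1) * p ^ k), hfac, mul_right_comm, Ne, hu.mul_left_eq_zero]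
  exact natCast_pow_mul_sub_one_pow_ne_zero hp.ne_zero hβ₀

theorem aug_single {A : Type*} [AddCommGroup A] (a : A) (r : R) : aug R A (single a r) = r := by
  simp [aug, lift_single]

theorem mem_augIdeal_iff {A : Type*} [AddCommGroup A] {x : AddMonoidAlgebra R A} :
    x ∈ augIdeal R A ↔ aug R A x = 0 :=
  RingHom.mem_ker

variable {n : ℕ} [NeZero n]

theorem sub_one_dvd_single_sub_one (a : ZMod n) :
    single (1 : ZMod n) (1 : R) - 1 ∣ single a 1 - 1 := by
  simpa [single_one_pow] using sub_one_dvd_pow_sub_one (single (1 : ZMod n) (1 : R)) a.val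

theorem sub_one_dvd_sub_algebraMap_aug (x : AddMonoidAlgebra R (ZMod n)) :
    single (1 : ZMod n) (1 : R) - 1 ∣ x - algebraMap R _ (aug R (ZMod n) x) := by
  induction x using AddMonoidAlgebra.induction_linear with
  | zero => simp
  | add x y hx hy => simpa [add_sub_add_comm] using dvd_add hx hy
  | single a r =>
    rw [aug_single, show single a r - algebraMap R _ r = algebraMap R _ r * (single a 1 - 1) by
      simp [mul_sub]]
    exact dvd_mul_of_dvd_right (sub_one_dvd_single_sub_one a) _

theorem augIdeal_eq_span_singleton :
    augIdeal R (ZMod n) = Ideal.span {single (1 : ZMod n) (1 : R) - 1} := by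
  refine le_antisymm (fun x hx => ?_) ?_
  · rw [Ideal.mem_span_singleton]
    simpa [mem_augIdeal_iff.1 hx] using sub_one_dvd_sub_algebraMap_aug x
  · rw [Ideal.span_le, Set.singleton_subset_iff, SetLike.mem_coe, mem_augIdeal_iff, map_sub,
      aug_single, map_one, sub_self]

theorem augIdeal_pow_eq_bot_iff {m : ℕ} :
    augIdeal R (ZMod n) ^ m = ⊥ ↔ (single (1 : ZMod n) (1 : R) - 1) ^ m = 0 := by
  rw [augIdeal_eq_span_singleton, Ideal.span_singleton_pow, Ideal.span_singleton_eq_bot]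

end GroupAlgebra

section FunctionalDegree

variable {A B : Type*} [AddCommGroup A] [AddCommGroup B]

theorem foldr_fdiff_zero (l : List A) : l.foldr fdiff (0 : A → B) = 0 := by
  induction l with
  | nil => rfl
  | cons a l ih => funext x; simp [ih, fdiff]

theorem DegLE.foldr_fdiff_eq_zero {f : A → B} {m : ℕ} (h : DegLE f m) {l : List A}
    (hl : m + 1 ≤ l.length) : l.foldr fdiff f = 0 := by
  rw [← List.take_append_drop (l.length - (m + 1)) l, List.foldr_append,
    h _ (by simp; omega), foldr_fdiff_zero]

theorem fdeg_le_of_degLE {f : A → B} {m : ℕ} (h : DegLE f m) :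
    fdeg f ≤ ((m : ℕ∞) : WithBot ℕ∞) := by
  unfold fdeg
  split_ifs with h0 hex
  · exact bot_le
  · exact_mod_cast Nat.sInf_le h
  · exact absurd ⟨m, h⟩ hex

theorem fdeg_eq_of_degLE {f : A → B} {m : ℕ} (h : DegLE f m) {l : List A} (hl : l.length = m)
    (hne : l.foldr fdiff f ≠ 0) : fdeg f = ((m : ℕ∞) : WithBot ℕ∞) := by
  have hf : f ≠ 0 := by
    rintro rfl
    exact hne (foldr_fdiff_zero l)
  have hmin : ∀ n, DegLE f n → m ≤ n := fun n hn => by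
    by_contra! hlt
    exact hne (hn.foldr_fdiff_eq_zero (by omega))
  rw [fdeg, if_neg hf, if_pos ⟨m, h⟩,
    le_antisymm (Nat.sInf_le h) (hmin _ (Nat.sInf_mem (s := {n | DegLE f n}) ⟨m, h⟩))]

end FunctionalDegree

section Translation

variable (R A : Type*) [CommRing R] [AddCommGroup A]

noncomputable def translation : Multiplicative A →* Module.End R (A → R) where
  toFun a := LinearMap.funLeft R R (· + a.toAdd)
  map_one' := by ext; simp
  map_mul' a b := by ext; simp [add_assoc]

noncomputable def translationAlgHom : AddMonoidAlgebra R A →ₐ[R] Module.End R (A → R) :=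
  lift _ _ _ (translation R A)

variable {R A}

theorem translationAlgHom_single (a : A) (r : R) (f : A → R) (x : A) :
    translationAlgHom R A (single a r) f x = r * f (x + a) := by
  simp [translationAlgHom, translation, lift_single]

theorem foldr_fdiff_eq_translationAlgHom (l : List A) (f : A → R) :
    l.foldr fdiff f = translationAlgHom R A ((l.map fun a => single a 1 - 1).prod) f := by
  induction l with
  | nil => simp
  | cons a l ih =>
    funext x
    simp [ih, fdiff, translationAlgHom_single]

theorem translationAlgHom_apply_single_zero [DecidableEq A] (s : AddMonoidAlgebra R A) (b : A) :
    translationAlgHom R A s (Pi.single b 1) 0 = s.coeff b := by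
  induction s using AddMonoidAlgebra.induction_linear with
  | zero => simp
  | add s t hs ht => simp [hs, ht]
  | single a r => simp [translationAlgHom_single, Pi.single_apply, Finsupp.single_apply]

end Translation

theorem degLE_of_sub_one_pow_eq_zero {R : Type*} [CommRing R] {n m : ℕ} [NeZero n]
    (hzero : (single (1 : ZMod n) (1 : R) - 1) ^ (m + 1) = 0) (f : ZMod n → R) : DegLE f m := by
  intro l hl
  have hdvd := Multiset.prod_dvd_prod_of_dvd (S := (l : Multiset (ZMod n)))
    (fun _ => single (1 : ZMod n) (1 : R) - 1) (fun a => single a 1 - 1)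
    fun a _ => sub_one_dvd_single_sub_one a
  simp only [Multiset.map_coe, Multiset.prod_coe, List.map_const', List.prod_replicate,
    hl, hzero, zero_dvd_iff] at hdvd
  rw [foldr_fdiff_eq_translationAlgHom, hdvd, map_zero]
  rfl

theorem iSup_fdeg_eq {R : Type*} [CommRing R] {n m : ℕ} [NeZero n]
    (hzero : (single (1 : ZMod n) (1 : R) - 1) ^ (m + 1) = 0)
    (hne : (single (1 : ZMod n) (1 : R) - 1) ^ m ≠ 0) :
    ⨆ f : ZMod n → R, fdeg f = ((m : ℕ∞) : WithBot ℕ∞) := by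
  have hdeg := degLE_of_sub_one_pow_eq_zero hzero
  obtain ⟨b, hb⟩ : ∃ b, ((single (1 : ZMod n) (1 : R) - 1) ^ m).coeff b ≠ 0 := by
    by_contra! h
    exact hne (AddMonoidAlgebra.ext (Finsupp.ext h))
  refine le_antisymm (iSup_le fun f => fdeg_le_of_degLE (hdeg f)) (le_iSup_of_le (Pi.single b 1)
    (fdeg_eq_of_degLE (hdeg _) (l := List.replicate m 1) List.length_replicate fun h => ?_).ge)
  rw [foldr_fdiff_eq_translationAlgHom, List.map_replicate, List.prod_replicate] at h
  exact hb (by rw [← translationAlgHom_apply_single_zero, h, Pi.zero_apply])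

/-- For a prime `p` and `α, β ≥ 1`, the nilpotency index of the augmentation ideal of
`(ℤ/p^βℤ)[ℤ/p^αℤ]` equals `(β(p-1)+1)p^{α-1}`; equivalently, the maximal functional
degree of a map `ℤ/p^αℤ → ℤ/p^βℤ` is `(β(p-1)+1)p^{α-1} - 1`. -/
theorem delta_cyclic_p_groups (p : ℕ) (hp : p.Prime) (α β : ℕ) (hα : 1 ≤ α) (hβ : 1 ≤ β) :
    (augIdeal (ZMod (p ^ β)) (ZMod (p ^ α)) ^ ((β * (p - 1) + 1) * p ^ (α - 1)) = ⊥ ∧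
        ∀ m : ℕ, augIdeal (ZMod (p ^ β)) (ZMod (p ^ α)) ^ m = ⊥ →
          (β * (p - 1) + 1) * p ^ (α - 1) ≤ m) ∧
      (⨆ f : ZMod (p ^ α) → ZMod (p ^ β), fdeg f)
        = ((((β * (p - 1) + 1) * p ^ (α - 1) - 1 : ℕ) : ℕ∞) : WithBot ℕ∞) := by
  obtain ⟨k, rfl⟩ : ∃ k, α = k + 1 := ⟨α - 1, by omega⟩
  obtain ⟨b, rfl⟩ : ∃ b, β = b + 1 := ⟨β - 1, by omega⟩
  have : NeZero (p ^ (k + 1)) := ⟨pow_ne_zero _ hp.ne_zero⟩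
  have hpβ : (p : ZMod (p ^ (b + 1))) ^ (b + 1) = 0 := by
    rw [← Nat.cast_pow, ZMod.natCast_self]
  have hpβ' : (p : ZMod (p ^ (b + 1))) ^ b ≠ 0 := by
    rw [← Nat.cast_pow, Ne, ZMod.natCast_eq_zero_iff, Nat.pow_dvd_pow_iff_le_right hp.one_lt]
    omega
  rw [Nat.add_sub_cancel]
  have hzero := sub_one_pow_eq_zero (k := k) hp single_one_pow_card (natCast_pow_eq_zero hpβ)
  have hne := sub_one_pow_ne_zero (k := k) hp hpβ' hpβ
  have hpos : 0 < ((b + 1) * (p - 1) + 1) * p ^ k :=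
    Nat.mul_pos (Nat.succ_pos _) (pow_pos hp.pos k)
  refine ⟨⟨augIdeal_pow_eq_bot_iff.2 hzero, fun m hm => ?_⟩, iSup_fdeg_eq ?_ hne⟩
  · by_contra! hlt
    exact hne (pow_eq_zero_of_le (by omega) (augIdeal_pow_eq_bot_iff.1 hm))
  · rwa [Nat.sub_add_cancel hpos]
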